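/- arXiv:math/0608083 — 4 statements merged into one kernel-verified Lean document; each statement's English description precedes it below -/
import Mathlib

section
/- Let t ≥ 1 and let 𝓕 be a family of subsets of T = {1,…,t}. Then there exist a finite set U with |U| ≤ C(t, ⌊t/2⌋) and subsets A₁, A₂, …, A_t of U such that for every nonempty X ⊆ T: X contains no member of 𝓕 if and only if ⋂_{i∈X} A_i ≠ ∅. -/
/-! The sets `X ⊆ T` containing no member of `𝓕` form a down-closed family, so they are exactly
the subsets of its maximal members `Y₁, …, Y_m`. These form an antichain, hence
`m ≤ C(t, ⌊t/2⌋)` by Sperner's theorem. Label the `Y_j` by distinct numbers, let `U` be the set of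
labels and `A_i` the set of labels of the `Y_j` containing `i`: for nonempty `X`, a point of
`⋂_{i ∈ X} A_i` is exactly the label of some `Y_j ⊇ X`. -/

open Finset Function

theorem card_filter_maximal_le_choose {α : Type*} [Fintype α] (P : Finset α → Prop)
    [DecidablePred (Maximal P)] :
    #(univ.filter (Maximal P)) ≤ (Fintype.card α).choose (Fintype.card α / 2) :=
  IsAntichain.sperner <| by
    simpa only [coe_filter, mem_univ, true_and] using setOfPred_maximal_antichain P

theorem Antitone.iff_exists_maximal_ge {β : Type*} [Preorder β] [Finite β] {P : β → Prop}
    (hP : Antitone P) (x : β) : P x ↔ ∃ y, Maximal P y ∧ x ≤ y := by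
  constructor
  · intro hx
    obtain ⟨y, hxy, hy⟩ := Finite.exists_le_maximal hx
    exact ⟨y, hy, hxy⟩
  · rintro ⟨y, hy, hxy⟩
    exact hP hxy hy.prop

theorem exists_forall_mem_image_filter_mem_iff {α β : Type*} [DecidableEq α] [DecidableEq β]
    {e : Finset α → β} (he : Injective e) (G : Finset (Finset α)) {X : Finset α}
    (hX : X.Nonempty) :
    (∃ u, ∀ i ∈ X, u ∈ (G.filter (i ∈ ·)).image e) ↔ ∃ Y ∈ G, X ⊆ Y := by
  constructor
  · rintro ⟨u, hu⟩
    obtain ⟨i₀, hi₀⟩ := hX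
    obtain ⟨Y, hY, rfl⟩ := mem_image.1 (hu i₀ hi₀)
    refine ⟨Y, (mem_filter.1 hY).1, fun i hi => ?_⟩
    obtain ⟨Y', hY', hY'Y⟩ := mem_image.1 (hu i hi)
    exact he hY'Y ▸ (mem_filter.1 hY').2
  · rintro ⟨Y, hY, hXY⟩
    exact ⟨e Y, fun i hi => mem_image_of_mem e (mem_filter.2 ⟨hY, hXY hi⟩)⟩

theorem exists_sets_inter_nonempty_iff_no_member_general
    (t : ℕ) (𝓕 : Finset (Finset (Fin t))) :
    ∃ (U : Finset ℕ) (A : Fin t → Finset ℕ),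
      U.card ≤ t.choose (t / 2) ∧ (∀ i, A i ⊆ U) ∧
      ∀ X : Finset (Fin t), X.Nonempty →
        ((¬ ∃ F ∈ 𝓕, F ⊆ X) ↔ ∃ u, ∀ i ∈ X, u ∈ A i) := by
  classical
  let P : Finset (Fin t) → Prop := fun Y => ¬ ∃ F ∈ 𝓕, F ⊆ Y
  have hP : Antitone P := fun _ _ hXY hY ⟨F, hF, hFX⟩ => hY ⟨F, hF, hFX.trans hXY⟩
  let G := univ.filter (Maximal P)
  refine ⟨G.image Encodable.encode, fun i => (G.filter (i ∈ ·)).image Encodable.encode,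
    ?_, fun i => image_subset_image (filter_subset _ _), fun X hX => ?_⟩
  · simpa using card_image_le.trans (card_filter_maximal_le_choose P)
  · rw [exists_forall_mem_image_filter_mem_iff Encodable.encode_injective G hX]
    exact (hP.iff_exists_maximal_ge X).trans (by simp [G])

/-- Let `t ≥ 1` and let `𝓕` be a family of subsets of `T = {1, …, t}`. Then there exist a
finite set `U` with `|U| ≤ C(t, ⌊t/2⌋)` and subsets `A₁, …, A_t` of `U` such that for every
nonempty `X ⊆ T`: `X` contains no member of `𝓕` iff `⋂_{i ∈ X} A_i ≠ ∅`. -/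
theorem exists_sets_inter_nonempty_iff_no_member
    (t : ℕ) (ht : 1 ≤ t) (𝓕 : Finset (Finset (Fin t))) :
    ∃ (U : Finset ℕ) (A : Fin t → Finset ℕ),
      U.card ≤ t.choose (t / 2) ∧ (∀ i, A i ⊆ U) ∧
      ∀ X : Finset (Fin t), X.Nonempty →
        ((¬ ∃ F ∈ 𝓕, F ⊆ X) ↔ ∃ u, ∀ i ∈ X, u ∈ A i) :=
  exists_sets_inter_nonempty_iff_no_member_general t 𝓕
end

section
/- Let 𝕂 be a field, r ≥ 1, and let H be a finite-dimensional 𝕂-linear subspace of the polynomial ring 𝕂[x₁,…,x_r]. Let G = (V,E) be a finite simple graph that admits a representation over H, i.e., assignments v ↦ f_v ∈ H and v ↦ c_v ∈ 𝕂^r such that f_v(c_v) ≠ 0 for every v ∈ V, and f_u(c_v) = 0 for every pair of distinct non-adjacent vertices u, v ∈ V. Then the Shannon capacity satisfies c(G) ≤ dim_𝕂 H. -/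
/-- The `k`-th strong power of a simple graph: vertices are `k`-tuples, and two distinct
tuples are adjacent iff in each coordinate the entries are equal or adjacent. -/
def gStrongPow {α : Type*} (G : SimpleGraph α) (k : ℕ) :
    SimpleGraph (Fin k → α) where
  Adj u v := u ≠ v ∧ ∀ i, u i = v i ∨ G.Adj (u i) (v i)
  symm := ⟨by
    rintro u v ⟨hne, h⟩
    exact ⟨hne.symm, fun i => (h i).imp Eq.symm (fun h' => G.adj_symm h')⟩⟩
  loopless := ⟨fun u h => h.1 rfl⟩
/-- The independence number of a graph on a finite vertex type: the maximum size of a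
set of pairwise non-adjacent vertices. -/
noncomputable def gIndepNum {α : Type*} [Fintype α] (G : SimpleGraph α) : ℕ :=
  sSup {n | ∃ s : Finset α, s.card = n ∧ (s : Set α).Pairwise (fun a b => ¬ G.Adj a b)}
/-- The Shannon capacity `c(G) = sup_{k ≥ 1} α(G^k)^(1/k)`. -/
noncomputable def gShannonCapacity {α : Type*} [Fintype α] (G : SimpleGraph α) : ℝ :=
  ⨆ k : ℕ, (gIndepNum (gStrongPow G (k + 1)) : ℝ) ^ ((1 : ℝ) / (k + 1))

/-!
Evaluating at the points `c_v` turns a representation over `H` into vectors `f_v ∈ H` and linear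
functionals `φ_v` on `H` with `φ_v (f_v) ≠ 0` and `φ_v (f_u) = 0` for distinct non-adjacent `u, v`
(a Haemers-type bound). Pure tensors then represent `G^k` in `H^{⊗k}`, since
`φ_v (f_u) = ∏ i, φ_{v i} (f_{u i})` vanishes as soon as one coordinate pair is distinct and
non-adjacent. On an independent set the vectors are linearly independent because the matrix
`(φ_v (f_u))` is diagonal with nonzero diagonal, so `α(G^k) ≤ (dim H)^k`.
-/

open Module PiTensorProduct
open scoped TensorProduct

theorem linearIndependent_of_dual_apply_eq_zero_of_ne {R M ι : Type*} [CommRing R]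
    [NoZeroDivisors R] [AddCommGroup M] [Module R M] {w : ι → M} {φ : ι → Dual R M}
    (hdiag : ∀ i, φ i (w i) ≠ 0) (hoff : ∀ i j, i ≠ j → φ j (w i) = 0) :
    LinearIndependent R w := by
  rw [linearIndependent_iff']
  intro s g hsum i hi
  have hφ := congrArg (φ i) hsum
  rw [map_sum, map_zero, Finset.sum_eq_single i
    (fun j _ hji => by rw [map_smul, hoff j i hji, smul_zero]) (absurd hi), map_smul] at hφ
  exact (smul_eq_zero.mp hφ).resolve_right (hdiag i)

theorem Module.finrank_piTensorProduct {R ι : Type*} [CommRing R] [StrongRankCondition R]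
    [Fintype ι] {M : ι → Type*} [∀ i, AddCommGroup (M i)] [∀ i, Module R (M i)]
    [∀ i, Module.Free R (M i)] [∀ i, Module.Finite R (M i)] :
    finrank R (⨂[R] i, M i) = ∏ i, finrank R (M i) := by
  classical
  rw [finrank_eq_card_basis (Basis.piTensorProduct fun i => Free.chooseBasis R (M i)),
    Fintype.card_pi]
  simp only [finrank_eq_card_chooseBasisIndex]

theorem exists_ne_not_adj_of_not_gStrongPow_adj {α : Type*} {G : SimpleGraph α} {k : ℕ}
    {u v : Fin k → α} (huv : u ≠ v) (h : ¬ (gStrongPow G k).Adj u v) :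
    ∃ i, u i ≠ v i ∧ ¬ G.Adj (u i) (v i) := by
  simpa [gStrongPow, huv] using h

namespace SimpleGraph

variable {R M V : Type*} [CommRing R] [AddCommGroup M] [Module R M]

/-- In the polynomial setting, `w v = f_v` and `φ v` is evaluation at the point `c_v`. -/
def IsRepresentation (G : SimpleGraph V) (w : V → M) (φ : V → Dual R M) : Prop :=
  (∀ v, φ v (w v) ≠ 0) ∧ ∀ u v, u ≠ v → ¬ G.Adj u v → φ v (w u) = 0

variable [IsDomain R]

theorem IsRepresentation.strongPow {G : SimpleGraph V} {w : V → M} {φ : V → Dual R M}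
    (hG : G.IsRepresentation w φ) (k : ℕ) :
    (gStrongPow G k).IsRepresentation (fun u => ⨂ₜ[R] i, w (u i))
      (fun v => dualDistrib (⨂ₜ[R] i, φ (v i))) := by
  refine ⟨fun v => ?_, fun u v huv hnadj => ?_⟩
  · rw [dualDistrib_apply]
    exact Finset.prod_ne_zero_iff.mpr fun i _ => hG.1 (v i)
  · obtain ⟨i, hne, hi⟩ := exists_ne_not_adj_of_not_gStrongPow_adj huv hnadj
    rw [dualDistrib_apply]
    exact Finset.prod_eq_zero (Finset.mem_univ i) (hG.2 _ _ hne hi)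

theorem IsRepresentation.gIndepNum_le_finrank [Fintype V] [Module.Finite R M]
    {G : SimpleGraph V} {w : V → M} {φ : V → Dual R M} (hG : G.IsRepresentation w φ) :
    gIndepNum G ≤ finrank R M := by
  refine csSup_le' ?_
  rintro n ⟨s, rfl, hs⟩
  rw [← Fintype.card_coe]
  refine LinearIndependent.fintype_card_le_finrank (b := fun v : s => w v) ?_
  refine linearIndependent_of_dual_apply_eq_zero_of_ne (φ := fun v : s => φ v)
    (fun v => hG.1 v) fun u v huv => hG.2 u v (Subtype.coe_ne_coe.mpr huv) ?_
  exact hs u.2 v.2 (Subtype.coe_ne_coe.mpr huv)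

theorem IsRepresentation.gIndepNum_gStrongPow_le [Fintype V] [Module.Free R M]
    [Module.Finite R M] {G : SimpleGraph V} {w : V → M} {φ : V → Dual R M}
    (hG : G.IsRepresentation w φ) (k : ℕ) :
    gIndepNum (gStrongPow G k) ≤ finrank R M ^ k := by
  simpa [finrank_piTensorProduct] using (hG.strongPow k).gIndepNum_le_finrank

end SimpleGraph

theorem gShannonCapacity_le_of_gIndepNum_le_pow {α : Type*} [Fintype α] {G : SimpleGraph α}
    {d : ℕ} (h : ∀ k, gIndepNum (gStrongPow G k) ≤ d ^ k) : gShannonCapacity G ≤ d := by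
  refine ciSup_le fun k => ?_
  calc (gIndepNum (gStrongPow G (k + 1)) : ℝ) ^ ((1 : ℝ) / (k + 1))
      ≤ ((d : ℝ) ^ (k + 1)) ^ (((k + 1 : ℕ) : ℝ)⁻¹) := by
        rw [one_div, Nat.cast_succ]
        gcongr
        exact_mod_cast h (k + 1)
    _ = d := Real.pow_rpow_inv_natCast d.cast_nonneg k.succ_ne_zero

theorem shannonCapacity_le_finrank_of_representation_general
    {𝕂 : Type*} [Field 𝕂] (r : ℕ)
    (H : Submodule 𝕂 (MvPolynomial (Fin r) 𝕂)) [FiniteDimensional 𝕂 H]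
    {V : Type*} [Fintype V] (G : SimpleGraph V)
    (f : V → MvPolynomial (Fin r) 𝕂) (c : V → Fin r → 𝕂)
    (hfH : ∀ v, f v ∈ H)
    (hdiag : ∀ v, MvPolynomial.eval (c v) (f v) ≠ 0)
    (hoff : ∀ u v, u ≠ v → ¬ G.Adj u v → MvPolynomial.eval (c v) (f u) = 0) :
    gShannonCapacity G ≤ (Module.finrank 𝕂 H : ℝ) := by
  have hG : G.IsRepresentation (fun v => (⟨f v, hfH v⟩ : H))
      (fun v => (MvPolynomial.aeval (c v)).toLinearMap ∘ₗ H.subtype) := by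
    simpa [SimpleGraph.IsRepresentation, MvPolynomial.coe_aeval_eq_eval] using ⟨hdiag, hoff⟩
  exact gShannonCapacity_le_of_gIndepNum_le_pow hG.gIndepNum_gStrongPow_le

/-- If a finite simple graph `G` has a representation over a finite-dimensional space
`H` of polynomials in `r` variables over a field `𝕂`, then `c(G) ≤ dim H`. -/
theorem shannonCapacity_le_finrank_of_representation
    {𝕂 : Type*} [Field 𝕂] (r : ℕ) (hr : 1 ≤ r)
    (H : Submodule 𝕂 (MvPolynomial (Fin r) 𝕂)) [FiniteDimensional 𝕂 H]
    {V : Type*} [Fintype V] (G : SimpleGraph V)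
    (f : V → MvPolynomial (Fin r) 𝕂) (c : V → Fin r → 𝕂)
    (hfH : ∀ v, f v ∈ H)
    (hdiag : ∀ v, MvPolynomial.eval (c v) (f v) ≠ 0)
    (hoff : ∀ u v, u ≠ v → ¬ G.Adj u v → MvPolynomial.eval (c v) (f u) = 0) :
    gShannonCapacity G ≤ (Module.finrank 𝕂 H : ℝ) :=
  shannonCapacity_le_finrank_of_representation_general r H G f c hfH hdiag hoff
end

section
/- Let 𝕂 be a field, r ≥ 1, and let H be a finite-dimensional 𝕂-linear subspace of the polynomial ring 𝕂[x₁,…,x_r]. Let G = (V,E) be a finite simple graph that admits a representation over H, i.e., assignments v ↦ f_v ∈ H and v ↦ c_v ∈ 𝕂^r such that f_v(c_v) ≠ 0 for every v ∈ V, and f_u(c_v) = 0 for every pair of distinct non-adjacent vertices u, v ∈ V. Then the independence number satisfies α(G) ≤ dim_𝕂 H. -/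
/-- If a finite simple graph `G` has a representation over a finite-dimensional space
`H` of polynomials in `r` variables over a field `𝕂`, then `α(G) ≤ dim H`. -/
theorem indepNum_le_finrank_of_representation
    {𝕂 : Type*} [Field 𝕂] (r : ℕ) (hr : 1 ≤ r)
    (H : Submodule 𝕂 (MvPolynomial (Fin r) 𝕂)) [FiniteDimensional 𝕂 H]
    {V : Type*} [Fintype V] (G : SimpleGraph V)
    (f : V → MvPolynomial (Fin r) 𝕂) (c : V → Fin r → 𝕂)
    (hfH : ∀ v, f v ∈ H)
    (hdiag : ∀ v, MvPolynomial.eval (c v) (f v) ≠ 0)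
    (hoff : ∀ u v, u ≠ v → ¬ G.Adj u v → MvPolynomial.eval (c v) (f u) = 0) :
    gIndepNum G ≤ Module.finrank 𝕂 H := by
  rw [gIndepNum]
  have h0 : 0 ∈ {n | ∃ s : Finset V, s.card = n ∧ (s : Set V).Pairwise (fun a b => ¬ G.Adj a b)} :=
    ⟨∅, by simp⟩
  apply csSup_le ⟨0, h0⟩
  rintro n ⟨s, rfl, hs⟩
  have li : LinearIndependent 𝕂 (fun v : s => (⟨f v, hfH v⟩ : H)) := by
    rw [Fintype.linearIndependent_iff]
    intro a ha u
    have ha' : (∑ v : s, a v • f v) = 0 := by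
      have := congrArg (Submodule.subtype H) ha
      simpa using this
    have hev := congrArg (MvPolynomial.eval (c u)) ha'
    rw [map_sum] at hev
    simp only [MvPolynomial.smul_eval, map_zero] at hev
    rw [Finset.sum_eq_single u] at hev
    · exact (mul_eq_zero.mp hev).resolve_right (hdiag u)
    · intro v _ hvu
      have hne : (v : V) ≠ (u : V) := fun h => hvu (Subtype.ext h)
      rw [hoff v u hne (hs v.2 u.2 hne), mul_zero]
    · intro h; exact absurd (Finset.mem_univ u) h
  have := li.fintype_card_le_finrank
  simpa using this
end

section
/- Let q be a prime and let r ≥ s ≥ 1. If 𝒜 is a family of s-element subsets of {1,…,r} such that |A∩B| ≢ s (mod q) for every pair of distinct A, B ∈ 𝒜, then |𝒜| ≤ ∑_{i=0}^{q-1} C(r,i). -/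
/-!
For `A ∈ 𝒜` let `f_A(B) = [|A ∩ B| ≡ s (mod q)]`, a function from subsets of `Fin r` to `𝔽_q`.
Evaluated at the members of `𝒜` these functions form an identity matrix, so they are linearly
independent. On the other hand, by Lucas' theorem and binomial inversion, the indicator of a
residue class mod `q` is an `𝔽_q`-combination of the `C(n, k)` with `k < q`, and `C(|A ∩ B|, k)`
counts the `k`-subsets `S ⊆ A` with `S ⊆ B`. Hence every `f_A` lies in the span of the
`∑_{i<q} C(r, i)` functions `B ↦ [S ⊆ B]` with `|S| < q`.
-/

open Finset

theorem Int.sum_range_succ_neg_one_pow_mul_choose_mul_choose (u n : ℕ) :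
    ∑ k ∈ Finset.range (n + 1), (-1 : ℤ) ^ (k + u) * k.choose u * n.choose k =
      if n = u then 1 else 0 := by
  by_cases hun : u ≤ n
  · obtain ⟨d, rfl⟩ := Nat.exists_eq_add_of_le hun
    have hterm (j : ℕ) : (-1 : ℤ) ^ (u + j + u) * (u + j).choose u * (u + d).choose (u + j) =
        (u + d).choose u * ((-1) ^ j * d.choose j) := by
      have h : ((u + d).choose (u + j) * (u + j).choose u : ℤ) = (u + d).choose u * d.choose j := by
        have := @Nat.choose_mul (u + d) (u + j) u (by omega)
        rw [show u + d - u = d by omega, show u + j - u = j by omega] at this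
        exact_mod_cast this
      rw [show u + j + u = j + 2 * u by omega, pow_add, pow_mul, neg_one_sq, one_pow, mul_one]
      linear_combination (-1 : ℤ) ^ j * h
    rw [show u + d + 1 = u + (d + 1) by omega, sum_range_add,
      sum_eq_zero fun k hk => by simp [Nat.choose_eq_zero_of_lt (mem_range.mp hk)],
      zero_add, sum_congr rfl fun j _ => hterm j, ← mul_sum, Int.alternating_sum_range_choose]
    by_cases hd : d = 0 <;> simp [hd]
  · rw [if_neg (by omega)]
    exact sum_eq_zero fun k hk => by
      simp [Nat.choose_eq_zero_of_lt (show k < u by grind)]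

theorem ZMod.natCast_choose_eq_choose_mod {p : ℕ} [Fact p.Prime] {k : ℕ} (hk : k < p) (n : ℕ) :
    (n.choose k : ZMod p) = ((n % p).choose k : ZMod p) := by
  have h := Choose.choose_modEq_choose_mod_mul_choose_div_nat (p := p) (n := n) (k := k)
  rw [Nat.mod_eq_of_lt hk, Nat.div_eq_of_lt hk, Nat.choose_zero_right, mul_one] at h
  exact (ZMod.natCast_eq_natCast_iff _ _ _).mpr h

theorem ZMod.ite_mod_eq_sum_choose {p : ℕ} [Fact p.Prime] (u n : ℕ) :
    (if n % p = u then 1 else 0 : ZMod p) =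
      ∑ k ∈ range p, (-1 : ZMod p) ^ (k + u) * k.choose u * n.choose k := by
  have hn : n % p + 1 ≤ p := Nat.mod_lt n (Fact.out : p.Prime).pos
  have h := congrArg (Int.cast : ℤ → ZMod p)
    (Int.sum_range_succ_neg_one_pow_mul_choose_mul_choose u (n % p))
  push_cast at h
  rw [← h, sum_subset (range_subset_range.mpr hn)]
  · refine sum_congr rfl fun k hk => ?_
    rw [ZMod.natCast_choose_eq_choose_mod (mem_range.mp hk) n]
  · intro k _ hk
    simp [Nat.choose_eq_zero_of_lt (show n % p < k by simpa using hk)]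

theorem Finset.natCast_choose_card_inter {R α : Type*} [Semiring R] [DecidableEq α]
    (k : ℕ) (A B : Finset α) :
    ((#(A ∩ B)).choose k : R) = ∑ S ∈ powersetCard k A, (Set.Ici S).indicator 1 B := by
  have h : powersetCard k (A ∩ B) = {S ∈ powersetCard k A | S ⊆ B} := by
    ext S
    simp only [mem_powersetCard, mem_filter, subset_inter_iff]
    tauto
  simp [Set.indicator_apply, ← card_powersetCard, h]

theorem Fintype.card_finset_card_lt {α : Type*} [Fintype α] (m : ℕ) :
    Fintype.card {S : Finset α // #S < m} = ∑ i ∈ range m, (Fintype.card α).choose i := by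
  classical
  rw [Fintype.card_subtype, card_eq_sum_card_fiberwise (f := Finset.card) (t := range m)
    (fun S hS => by simpa using hS)]
  refine Finset.sum_congr rfl fun i hi => ?_
  rw [← Fintype.card_finset_len, Fintype.card_subtype]
  congr 1
  ext S
  simp only [mem_filter, mem_univ, true_and]
  grind

theorem linearIndependent_of_apply_eq_ite {R ι X : Type*} [Semiring R] [DecidableEq ι]
    [Finite ι] (v : ι → X → R) (x : ι → X) (h : ∀ i j, v j (x i) = if i = j then 1 else 0) :
    LinearIndependent R v := by
  refine LinearIndependent.of_comp (LinearMap.funLeft R R x) ?_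
  convert (Pi.basisFun R ι).linearIndependent with j
  ext i
  simp [h, Pi.single_apply]

theorem LinearIndependent.fintype_card_le_of_mem_span {R M ι κ : Type*} [Ring R]
    [StrongRankCondition R] [AddCommGroup M] [Module R M] [Fintype ι] [Fintype κ]
    {v : ι → M} (hv : LinearIndependent R v) (w : κ → M)
    (h : ∀ i, v i ∈ Submodule.span R (Set.range w)) :
    Fintype.card ι ≤ Fintype.card κ := by
  classical
  exact (linearIndependent_le_span_aux' v hv _ (Set.range_subset_iff.mpr h)).trans
    (Fintype.card_range_le w)

theorem ite_card_inter_mod_eq_mem_span_indicator_Ici {α : Type*} [DecidableEq α] {p : ℕ}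
    [Fact p.Prime] (u : ℕ) (A : Finset α) :
    (fun B => if #(A ∩ B) % p = u then (1 : ZMod p) else 0) ∈
      Submodule.span (ZMod p)
        (Set.range fun S : {S : Finset α // #S < p} => (Set.Ici S.1).indicator 1) := by
  have hexpand : (fun B => if #(A ∩ B) % p = u then (1 : ZMod p) else 0) =
      ∑ k ∈ range p, ((-1 : ZMod p) ^ (k + u) * k.choose u) •
        ∑ S ∈ powersetCard k A, (Set.Ici S).indicator 1 := by
    ext B
    simp only [ZMod.ite_mod_eq_sum_choose, Finset.sum_apply, Pi.smul_apply, smul_eq_mul,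
      natCast_choose_card_inter, mul_assoc]
  rw [hexpand]
  refine Submodule.sum_mem _ fun k hk => Submodule.smul_mem _ _ <|
    Submodule.sum_mem _ fun S hS => Submodule.subset_span ⟨⟨S, ?_⟩, rfl⟩
  rw [(mem_powersetCard.mp hS).2]
  exact mem_range.mp hk

theorem card_le_sum_choose_of_card_inter_not_modEq_general
    (q r s : ℕ) (hq : q.Prime)
    (𝒜 : Finset (Finset (Fin r)))
    (hcard : ∀ A ∈ 𝒜, A.card = s)
    (hmod : ∀ A ∈ 𝒜, ∀ B ∈ 𝒜, A ≠ B → ¬ (A ∩ B).card ≡ s [MOD q]) :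
    𝒜.card ≤ ∑ i ∈ Finset.range q, r.choose i := by
  have : Fact q.Prime := ⟨hq⟩
  let f : 𝒜 → Finset (Fin r) → ZMod q := fun A B => if #(A.1 ∩ B) % q = s % q then 1 else 0
  have hf : LinearIndependent (ZMod q) f := by
    refine linearIndependent_of_apply_eq_ite f Subtype.val fun B A => ?_
    by_cases hAB : B = A
    · simp [f, hAB, hcard A A.2]
    · simpa [f, hAB, Nat.ModEq] using hmod A A.2 B B.2 (fun h => hAB (Subtype.ext h.symm))
  calc #𝒜 = Fintype.card 𝒜 := (Fintype.card_coe 𝒜).symm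
    _ ≤ Fintype.card {S : Finset (Fin r) // #S < q} :=
      hf.fintype_card_le_of_mem_span _ fun A => ite_card_inter_mod_eq_mem_span_indicator_Ici _ _
    _ = ∑ i ∈ range q, r.choose i := by rw [Fintype.card_finset_card_lt, Fintype.card_fin]

/-- Let `q` be a prime and `r ≥ s ≥ 1`. If `𝒜` is a family of `s`-element subsets of
`{1, …, r}` such that `|A ∩ B| ≢ s (mod q)` for all distinct `A, B ∈ 𝒜`, then
`|𝒜| ≤ ∑_{i = 0}^{q - 1} C(r, i)`. -/
theorem card_le_sum_choose_of_card_inter_not_modEq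
    (q r s : ℕ) (hq : q.Prime) (hs : 1 ≤ s) (hsr : s ≤ r)
    (𝒜 : Finset (Finset (Fin r)))
    (hcard : ∀ A ∈ 𝒜, A.card = s)
    (hmod : ∀ A ∈ 𝒜, ∀ B ∈ 𝒜, A ≠ B → ¬ (A ∩ B).card ≡ s [MOD q]) :
    𝒜.card ≤ ∑ i ∈ Finset.range q, r.choose i :=
  card_le_sum_choose_of_card_inter_not_modEq_general q r s hq 𝒜 hcard hmod
end
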